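/- If T is uniformly distributed on the unit sphere S^(n−1) ⊆ ℝⁿ and η ~ Beta(n/2, 2) is independent of T, then the random variable ε = √((n+4)η)·T has density equal to the Epanechnikov kernel 𝓔(x) = ((n+2)/(2 c_n (n+4)^((n+2)/2)))·(n+4 − ‖x‖²) on {‖x‖² < n+4}. -/

import Mathlib

open MeasureTheory Real

/-- Volume of the unit ball in `ℝⁿ`: `c_n = π^(n/2) / Γ(n/2 + 1)`. -/
noncomputable def unitBallVol (n : ℕ) : ℝ :=
  Real.pi ^ ((n : ℝ) / 2) / Real.Gamma ((n : ℝ) / 2 + 1)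

/-- The Epanechnikov kernel on `ℝⁿ`. -/
noncomputable def epan (n : ℕ) (x : EuclideanSpace ℝ (Fin n)) : ℝ :=
  if ‖x‖ ^ 2 < (n : ℝ) + 4 then
    (((n : ℝ) + 2) / (2 * unitBallVol n * ((n : ℝ) + 4) ^ (((n : ℝ) + 2) / 2)))
      * ((n : ℝ) + 4 - ‖x‖ ^ 2)
  else 0

/-- The uniform probability distribution on the unit sphere of `ℝⁿ`, as a measure on `ℝⁿ`. -/
noncomputable def sphereUniform (n : ℕ) : Measure (EuclideanSpace ℝ (Fin n)) :=
  Measure.map Subtype.val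
    ((((volume : Measure (EuclideanSpace ℝ (Fin n))).toSphere) Set.univ)⁻¹ •
      (volume : Measure (EuclideanSpace ℝ (Fin n))).toSphere)

/-- The `Beta(a, b)` distribution on `[0,1]`, as a measure on `ℝ`. -/
noncomputable def betaMeas (a b : ℝ) : Measure ℝ :=
  volume.withDensity fun z =>
    ENNReal.ofReal (if 0 ≤ z ∧ z ≤ 1 then
      z ^ (a - 1) * (1 - z) ^ (b - 1) * (Real.Gamma (a + b) / (Real.Gamma a * Real.Gamma b))
    else 0)

/-!
The direction `T` and the radius `R = √((n+4)η)` are independent, so the law of `R • T` is the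
image of the product of their laws under `(t, r) ↦ r • t`. In polar coordinates Lebesgue measure
is `σ ⊗ r^(n-1) dr`, where the surface measure `σ` of the unit sphere has total mass `n c_n`; hence
a uniform direction together with an independent radius of density `n c_n r^(n-1) φ(r)` has density
`φ(‖x‖)`. The substitution `z = r² / (n+4)` turns the `Beta(n/2, 2)` density of `η` into exactly
this radial density, with `φ` the profile of the Epanechnikov kernel.
-/

open Set Metric
open scoped ENNReal

section Polar

variable {E : Type*} [NormedAddCommGroup E] [NormedSpace ℝ E] [MeasurableSpace E] [BorelSpace E]
  [FiniteDimensional ℝ E] [Nontrivial E] (μ : Measure E) [μ.IsAddHaarMeasure]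

theorem lintegral_eq_lintegral_toSphere_lintegral_Ioi {F : E → ℝ≥0∞} (hF : Measurable F) :
    ∫⁻ x, F x ∂μ = ∫⁻ t, (∫⁻ r in Ioi (0 : ℝ),
      ENNReal.ofReal (r ^ (Module.finrank ℝ E - 1)) * F (r • (t : E))) ∂μ.toSphere := by
  have hFsmul : Measurable fun p : sphere (0 : E) 1 × Ioi (0 : ℝ) => F ((p.2 : ℝ) • (p.1 : E)) :=
    hF.comp (by fun_prop)
  calc ∫⁻ x, F x ∂μ = ∫⁻ x : ({0}ᶜ : Set E), F x ∂μ.comap Subtype.val := by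
        rw [lintegral_subtype_comap (measurableSet_singleton 0).compl, restrict_compl_singleton]
    _ = ∫⁻ p, F ((p.2 : ℝ) • (p.1 : E))
          ∂μ.toSphere.prod (.volumeIoiPow (Module.finrank ℝ E - 1)) := by
        rw [← μ.measurePreserving_homeomorphUnitSphereProd.lintegral_comp_emb
          (Homeomorph.measurableEmbedding _)]
        refine lintegral_congr fun x => ?_
        simp [smul_inv_smul₀ (norm_ne_zero_iff.2 x.2)]
    _ = _ := by
        rw [lintegral_prod _ hFsmul.aemeasurable]
        refine lintegral_congr fun t => ?_
        have hFt : Measurable fun r : Ioi (0 : ℝ) => F ((r : ℝ) • (t : E)) := hF.comp (by fun_prop)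
        rw [Measure.volumeIoiPow, lintegral_withDensity_eq_lintegral_mul _ (by fun_prop) hFt,
          ← lintegral_subtype_comap measurableSet_Ioi]
        rfl

theorem map_smul_prod_radial_withDensity {φ : ℝ → ℝ≥0∞} (hφ : Measurable φ) :
    ((((μ.toSphere univ)⁻¹ • μ.toSphere).map Subtype.val).prod
        (volume.withDensity fun r => μ.toSphere univ *
          (Ioi 0).indicator (fun r => ENNReal.ofReal (r ^ (Module.finrank ℝ E - 1)) * φ r) r)).map
      (fun p : E × ℝ => p.2 • p.1) = μ.withDensity fun x => φ ‖x‖ := by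
  set c := μ.toSphere univ
  set ρ : ℝ → ℝ≥0∞ := fun r => ENNReal.ofReal (r ^ (Module.finrank ℝ E - 1)) * φ r
  have hsmul : Measurable fun p : E × ℝ => p.2 • p.1 := by fun_prop
  ext A hA
  have hφA : Measurable (A.indicator fun x => φ ‖x‖) := (hφ.comp measurable_norm).indicator hA
  have hsection (t : sphere (0 : E) 1) :
      MeasurableSet (Prod.mk (t : E) ⁻¹' ((fun p : E × ℝ => p.2 • p.1) ⁻¹' A)) :=
    measurable_prodMk_left (hsmul hA)
  have hradial (t : sphere (0 : E) 1) :
      (volume.withDensity fun r => c * (Ioi 0).indicator ρ r)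
          (Prod.mk (t : E) ⁻¹' ((fun p : E × ℝ => p.2 • p.1) ⁻¹' A))
        = c * ∫⁻ r in Ioi (0 : ℝ), ENNReal.ofReal (r ^ (Module.finrank ℝ E - 1)) *
            A.indicator (fun x => φ ‖x‖) (r • (t : E)) := by
    rw [withDensity_apply _ (hsection t),
      lintegral_const_mul _ ((by fun_prop : Measurable ρ).indicator measurableSet_Ioi),
      setLIntegral_indicator measurableSet_Ioi, inter_comm,
      ← setLIntegral_indicator (hsection t)]
    congr 1
    refine setLIntegral_congr_fun measurableSet_Ioi fun r (hr : 0 < r) => ?_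
    have hnorm : ‖r • (t : E)‖ = r := by simp [norm_smul, abs_of_pos hr]
    by_cases hrA : r • (t : E) ∈ A
    · simp [hrA, hnorm, ρ]
    · simp [hrA]
  have hc : c ≠ 0 := Measure.measure_univ_ne_zero.2 μ.toSphere_ne_zero
  rw [Measure.map_apply hsmul hA, Measure.prod_apply (hsmul hA),
    lintegral_map (measurable_measure_prodMk_left (hsmul hA)) measurable_subtype_coe,
    lintegral_smul_measure, withDensity_apply _ hA, ← lintegral_indicator hA,
    lintegral_eq_lintegral_toSphere_lintegral_Ioi μ hφA]
  simp_rw [hradial]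
  rw [lintegral_const_mul' _ _ (measure_ne_top _ _), smul_eq_mul, ← mul_assoc,
    ENNReal.inv_mul_cancel hc (measure_ne_top _ _), one_mul]

end Polar

theorem image_sq_div_Ioi {M : ℝ} (hM : 0 < M) : (fun r : ℝ => r ^ 2 / M) '' Ioi 0 = Ioi 0 := by
  refine Subset.antisymm (image_subset_iff.2 fun r (hr : 0 < r) => by
      simp only [mem_preimage, mem_Ioi]; positivity)
    fun z (hz : 0 < z) => ⟨√(M * z), Real.sqrt_pos.2 (by positivity), ?_⟩
  simp only
  rw [sq_sqrt (by positivity), mul_div_cancel_left₀ _ hM.ne']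

theorem map_sqrt_const_mul_withDensity {M : ℝ} (hM : 0 < M) {f : ℝ → ℝ≥0∞}
    (hf : ∀ z < 0, f z = 0) :
    (volume.withDensity f).map (fun z => √(M * z)) =
      volume.withDensity
        ((Ioi 0).indicator fun r => ENNReal.ofReal (2 * r / M) * f (r ^ 2 / M)) := by
  have hsqrt : Measurable fun z : ℝ => √(M * z) := by fun_prop
  ext A hA
  set S := (fun z : ℝ => √(M * z)) ⁻¹' A
  have hS : MeasurableSet S := hsqrt hA
  have hderiv (r : ℝ) (_ : r ∈ Ioi (0 : ℝ)) :
      HasDerivWithinAt (fun r : ℝ => r ^ 2 / M) (2 * r / M) (Ioi 0) r := by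
    simpa using ((hasDerivAt_pow 2 r).div_const M).hasDerivWithinAt
  have hinj : InjOn (fun r : ℝ => r ^ 2 / M) (Ioi 0) := fun r (hr : 0 < r) s (hs : 0 < s) hrs =>
    (pow_left_inj₀ hr.le hs.le two_ne_zero).1 (by simpa [hM.ne'] using hrs)
  have hsupp : Function.support (S.indicator f) ⊆ Ici 0 := fun z hz => by
    by_contra h
    exact hz (by simp [hf z (not_le.1 h)])
  rw [Measure.map_apply hsqrt hA, withDensity_apply _ hS, withDensity_apply _ hA,
    ← lintegral_indicator hS, ← setLIntegral_eq_of_support_subset hsupp,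
    ← restrict_Ioi_eq_restrict_Ici]
  conv_lhs => rw [← image_sq_div_Ioi hM]
  rw [lintegral_image_eq_lintegral_abs_deriv_mul measurableSet_Ioi hderiv hinj,
    setLIntegral_indicator measurableSet_Ioi, inter_comm, ← setLIntegral_indicator hA]
  refine setLIntegral_congr_fun measurableSet_Ioi fun r (hr : 0 < r) => ?_
  have hroot : √(M * (r ^ 2 / M)) = r := by
    rw [mul_div_cancel₀ _ hM.ne', sqrt_sq hr.le]
  by_cases hrA : r ∈ A
  · simp [S, hrA, hroot, abs_of_pos (by positivity : 0 < 2 * r / M)]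
  · simp [S, hrA, hroot]

noncomputable def betaDensity (a b z : ℝ) : ℝ :=
  if 0 ≤ z ∧ z ≤ 1 then
    z ^ (a - 1) * (1 - z) ^ (b - 1) * (Real.Gamma (a + b) / (Real.Gamma a * Real.Gamma b))
  else 0

theorem betaMeas_eq_withDensity (a b : ℝ) :
    betaMeas a b = volume.withDensity fun z => ENNReal.ofReal (betaDensity a b z) := rfl

noncomputable def epanProfile (n : ℕ) (r : ℝ) : ℝ :=
  if r ^ 2 < (n : ℝ) + 4 then
    (((n : ℝ) + 2) / (2 * unitBallVol n * ((n : ℝ) + 4) ^ (((n : ℝ) + 2) / 2)))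
      * ((n : ℝ) + 4 - r ^ 2)
  else 0

theorem epan_eq_epanProfile_norm (n : ℕ) (x : EuclideanSpace ℝ (Fin n)) :
    epan n x = epanProfile n ‖x‖ := rfl

theorem measurable_epanProfile (n : ℕ) : Measurable (epanProfile n) :=
  Measurable.ite (measurableSet_lt (by fun_prop) measurable_const) (by fun_prop) measurable_const

theorem unitBallVol_pos (n : ℕ) : 0 < unitBallVol n :=
  div_pos (rpow_pos_of_pos pi_pos _) (Gamma_pos_of_pos (by positivity))

theorem toSphere_univ_euclideanSpace (n : ℕ) :
    (volume : Measure (EuclideanSpace ℝ (Fin n))).toSphere univ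
      = ENNReal.ofReal (n * unitBallVol n) := by
  rcases Nat.eq_zero_or_pos n with rfl | hn
  · simp [Measure.toSphere_apply_univ]
  have : Nonempty (Fin n) := ⟨⟨0, hn⟩⟩
  have hpow : √π ^ n = π ^ ((n : ℝ) / 2) := by
    rw [sqrt_eq_rpow, ← rpow_natCast, ← rpow_mul pi_pos.le]
    ring_nf
  rw [Measure.toSphere_apply_univ, finrank_euclideanSpace_fin, EuclideanSpace.volume_ball,
    Fintype.card_fin, ENNReal.ofReal_one, one_pow, one_mul, hpow, ← ENNReal.ofReal_natCast,
    ← ENNReal.ofReal_mul (by positivity), unitBallVol]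

theorem Gamma_add_two {a : ℝ} (h₀ : a ≠ 0) (h₁ : a + 1 ≠ 0) :
    Gamma (a + 2) = (a + 1) * a * Gamma a := by
  rw [show a + 2 = a + 1 + 1 by ring, Gamma_add_one h₁, Gamma_add_one h₀, mul_assoc]

theorem mul_betaDensity_sq_div_eq_epanProfile (n : ℕ) (hn : 1 ≤ n) {r : ℝ} (hr : 0 < r) :
    2 * r / (n + 4) * betaDensity ((n : ℝ) / 2) 2 (r ^ 2 / (n + 4))
      = n * unitBallVol n * (r ^ (n - 1) * epanProfile n r) := by
  set M : ℝ := n + 4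
  have hM : 0 < M := by positivity
  have hc : 0 < unitBallVol n := unitBallVol_pos n
  simp only [betaDensity, epanProfile]
  norm_num only [rpow_one, Gamma_two,
    Gamma_add_two (by positivity : (n : ℝ) / 2 ≠ 0) (by positivity)]
  split_ifs with hbeta hball hball
  · have hpow : (r ^ 2 / M) ^ ((n : ℝ) / 2 - 1) = r ^ ((n : ℝ) - 2) / M ^ ((n : ℝ) / 2 - 1) := by
      rw [div_rpow (by positivity) hM.le, ← rpow_natCast r 2, ← rpow_mul hr.le]
      push_cast
      ring_nf
    have hrn : r ^ (n - 1) = r ^ ((n : ℝ) - 2) * r := by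
      rw [← rpow_natCast, ← rpow_add_one hr.ne', Nat.cast_sub hn]
      push_cast
      ring_nf
    have hMpow : M ^ (((n : ℝ) + 2) / 2) = M ^ ((n : ℝ) / 2 - 1) * M ^ 2 := by
      rw [← rpow_natCast M 2, ← rpow_add hM]
      push_cast
      ring_nf
    have : 0 < M ^ ((n : ℝ) / 2 - 1) := rpow_pos_of_pos hM _
    rw [hpow, hrn, hMpow]
    field_simp
    ring
  · have hone : r ^ 2 / M = 1 := le_antisymm hbeta.2 ((le_div_iff₀ hM).2 (by simpa using hball))
    simp [hone]
  · exact absurd ⟨by positivity, (div_le_one hM).2 hball.le⟩ hbeta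
  · simp

theorem map_sqrt_betaMeas (n : ℕ) (hn : 1 ≤ n) :
    (betaMeas ((n : ℝ) / 2) 2).map (fun z => √(((n : ℝ) + 4) * z)) =
      volume.withDensity fun r => (volume : Measure (EuclideanSpace ℝ (Fin n))).toSphere univ *
        (Ioi 0).indicator (fun r => ENNReal.ofReal (r ^ (Module.finrank ℝ
          (EuclideanSpace ℝ (Fin n)) - 1)) * ENNReal.ofReal (epanProfile n r)) r := by
  rw [betaMeas_eq_withDensity, map_sqrt_const_mul_withDensity (by positivity)
    fun z hz => by simp [betaDensity, hz.not_ge], toSphere_univ_euclideanSpace,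
    finrank_euclideanSpace_fin]
  congr 1
  funext r
  by_cases hr : 0 < r
  · simp only [indicator_of_mem (mem_Ioi.2 hr)]
    rw [← ENNReal.ofReal_mul (by positivity), ← ENNReal.ofReal_mul (by positivity),
      ← ENNReal.ofReal_mul (by have := unitBallVol_pos n; positivity),
      mul_betaDensity_sq_div_eq_epanProfile n hn hr]
  · simp [indicator_of_notMem (show r ∉ Ioi 0 from hr)]

/-- If `T` is uniform on the unit sphere `S^(n-1)` and `η ~ Beta(n/2, 2)` is independent of
`T`, then `ε = √((n+4)η) • T` has the Epanechnikov density `𝓔`. -/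
theorem epan_sampling {Ω : Type*} [MeasurableSpace Ω] (P : Measure Ω) [IsProbabilityMeasure P]
    (n : ℕ) (hn : 1 ≤ n) (T : Ω → EuclideanSpace ℝ (Fin n)) (η : Ω → ℝ)
    (hT : Measurable T) (hη : Measurable η)
    (hTd : Measure.map T P = sphereUniform n)
    (hηd : Measure.map η P = betaMeas ((n : ℝ) / 2) 2)
    (hind : ProbabilityTheory.IndepFun T η P) :
    Measure.map (fun ω => Real.sqrt (((n : ℝ) + 4) * η ω) • T ω) P
      = volume.withDensity fun x => ENNReal.ofReal (epan n x) := by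
  have : Nonempty (Fin n) := ⟨⟨0, hn⟩⟩
  have hR : Measurable fun z : ℝ => √(((n : ℝ) + 4) * z) := by fun_prop
  have hjoint : P.map (fun ω => (T ω, √(((n : ℝ) + 4) * η ω)))
      = (sphereUniform n).prod ((betaMeas ((n : ℝ) / 2) 2).map fun z => √(((n : ℝ) + 4) * z)) := by
    rw [← hTd, ← hηd, Measure.map_map hR hη]
    exact (ProbabilityTheory.indepFun_iff_map_prod_eq_prod_map_map hT.aemeasurable
      (hR.comp hη).aemeasurable).1 (hind.comp measurable_id hR)
  rw [show (fun ω => √(((n : ℝ) + 4) * η ω) • T ω)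
      = (fun p => p.2 • p.1) ∘ fun ω => (T ω, √(((n : ℝ) + 4) * η ω)) from rfl,
    ← Measure.map_map (by fun_prop) (by fun_prop), hjoint, map_sqrt_betaMeas n hn]
  simp only [epan_eq_epanProfile_norm]
  exact map_smul_prod_radial_withDensity volume (measurable_epanProfile n).ennreal_ofReal
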